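/- Let R be an integral domain and let C̃ and C̃' be S-complexes over R. If there exists a morphism of S-complexes from C̃ to C̃', then h(C̃) ≤ h(C̃'). -/

import Mathlib

/-!  S-complexes over a commutative ring `R` (following Daemi–Scaduto).

An S-complex is a ℤ-graded finitely generated free chain complex
`C̃ = C ⊕ C[1] ⊕ R` determined by the data of `C` together with maps
`d, v, δ₁, δ₂`.  We encode the graded module `C` by a single module `Tot`
together with an internal ℤ-grading by submodules, and we carry the sign
map `ε` (multiplication by `(-1)^i` on the degree `i` part) as data. -/

universe u

/-- The data of an S-complex over `R`: a module `Tot` (the total module of the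
ℤ-graded module `C_*`), its grading, the sign map `ε`, and the structure maps
`d : C_* → C_{*-1}`, `v : C_* → C_{*-2}`, `δ₁ : C_* → R` (supported in degree 1),
`δ₂ : R → C_{-2}`. -/
structure SComplexData (R : Type u) [CommRing R] where
  Tot : Type u
  [acg : AddCommGroup Tot]
  [mod : Module R Tot]
  grading : ℤ → Submodule R Tot
  sign : Tot →ₗ[R] Tot
  d : Tot →ₗ[R] Tot
  v : Tot →ₗ[R] Tot
  δ₁ : Tot →ₗ[R] R
  δ₂ : R →ₗ[R] Tot

attribute [instance] SComplexData.acg SComplexData.mod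

namespace SComplexData

variable {R : Type u} [CommRing R]

/-- The axioms making the data of `X : SComplexData R` into a genuine S-complex:
the grading is an internal direct sum decomposition into finitely generated free
pieces, the sign map is `(-1)^i` on the degree `i` piece, the structure maps are
graded of the appropriate degrees (`δ₁` supported on `C_1`, `δ₂` valued in `C_{-2}`),
and the S-complex relations `d∘d = 0`, `δ₁∘d = 0`, `d∘δ₂ = 0`,
`d∘v − v∘d − δ₂∘δ₁ = 0` hold; the latter are equivalent to `d̃ ∘ d̃ = 0` for the
differential `d̃(α, β, r) = (dα, vα − dβ + δ₂ r, δ₁ α)` on `C̃ = C ⊕ C[1] ⊕ R`. -/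
structure IsSComplex (X : SComplexData R) : Prop where
  internal : DirectSum.IsInternal X.grading
  free : ∀ i : ℤ, Module.Free R ↥(X.grading i)
  finite : Module.Finite R X.Tot
  sign_spec : ∀ i : ℤ, ∀ x ∈ X.grading i, X.sign x = if Even i then x else -x
  d_deg : ∀ i : ℤ, (X.grading i).map X.d ≤ X.grading (i - 1)
  v_deg : ∀ i : ℤ, (X.grading i).map X.v ≤ X.grading (i - 2)
  δ₁_deg : ∀ i : ℤ, i ≠ 1 → ∀ x ∈ X.grading i, X.δ₁ x = 0
  δ₂_deg : LinearMap.range X.δ₂ ≤ X.grading (-2)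
  d_d : X.d ∘ₗ X.d = 0
  δ₁_d : X.δ₁ ∘ₗ X.d = 0
  d_δ₂ : X.d ∘ₗ X.δ₂ = 0
  d_v : X.d ∘ₗ X.v - X.v ∘ₗ X.d - X.δ₂ ∘ₗ X.δ₁ = 0

/-- A morphism of S-complexes `λ̃ : C̃ → C̃'`, i.e. a degree-0 chain map
`λ̃(α, β, r) = (λ α, μ α + λ β + Δ₂ r, Δ₁ α + r)`, recorded through its
components `λ, μ, Δ₁, Δ₂` (here `l` stands for `λ`). -/
structure SMorphism (X Y : SComplexData R) where
  l : X.Tot →ₗ[R] Y.Tot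
  μ : X.Tot →ₗ[R] Y.Tot
  Δ₁ : X.Tot →ₗ[R] R
  Δ₂ : R →ₗ[R] Y.Tot
  l_deg : ∀ i : ℤ, (X.grading i).map l ≤ Y.grading i
  μ_deg : ∀ i : ℤ, (X.grading i).map μ ≤ Y.grading (i - 1)
  Δ₁_deg : ∀ i : ℤ, i ≠ 0 → ∀ x ∈ X.grading i, Δ₁ x = 0
  Δ₂_deg : LinearMap.range Δ₂ ≤ Y.grading (-1)
  comm_d : l ∘ₗ X.d = Y.d ∘ₗ l
  comm_δ₁ : Δ₁ ∘ₗ X.d + X.δ₁ = Y.δ₁ ∘ₗ l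
  comm_δ₂ : Y.d ∘ₗ Δ₂ + l ∘ₗ X.δ₂ = Y.δ₂
  comm_v : μ ∘ₗ X.d + Y.d ∘ₗ μ + l ∘ₗ X.v - Y.v ∘ₗ l + Δ₂ ∘ₗ X.δ₁ - Y.δ₂ ∘ₗ Δ₁ = 0

end SComplexData

/-- Functions `ℕ → M` with finitely many nonzero values (i.e. support bounded
above); this realizes the polynomial module `M[x]`. -/
def NatBdd (R : Type u) [CommRing R] (M : Type u) [AddCommGroup M] [Module R M] :
    Submodule R (ℕ → M) where
  carrier := {f | ∃ N : ℕ, ∀ n : ℕ, N < n → f n = 0}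
  add_mem' := by
    rintro f g ⟨N, hN⟩ ⟨K, hK⟩
    refine ⟨max N K, fun n hn => ?_⟩
    have h1 := hN n (lt_of_le_of_lt (le_max_left N K) hn)
    have h2 := hK n (lt_of_le_of_lt (le_max_right N K) hn)
    show f n + g n = 0
    rw [h1, h2, add_zero]
  zero_mem' := ⟨0, fun _ _ => rfl⟩
  smul_mem' := by
    rintro c f ⟨N, hN⟩
    refine ⟨N, fun n hn => ?_⟩
    show c • f n = 0
    rw [hN n hn, smul_zero]

/-- Functions `ℤ → M` with support bounded above; for `M = R` this realizes the
ring `R[[x⁻¹, x]]` of Laurent series with finitely many positive powers of `x`. -/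
def IntBdd (R : Type u) [CommRing R] (M : Type u) [AddCommGroup M] [Module R M] :
    Submodule R (ℤ → M) where
  carrier := {f | ∃ N : ℤ, ∀ n : ℤ, N < n → f n = 0}
  add_mem' := by
    rintro f g ⟨N, hN⟩ ⟨K, hK⟩
    refine ⟨max N K, fun n hn => ?_⟩
    have h1 := hN n (lt_of_le_of_lt (le_max_left N K) hn)
    have h2 := hK n (lt_of_le_of_lt (le_max_right N K) hn)
    show f n + g n = 0
    rw [h1, h2, add_zero]
  zero_mem' := ⟨0, fun _ _ => rfl⟩
  smul_mem' := by
    rintro c f ⟨N, hN⟩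
    refine ⟨N, fun n hn => ?_⟩
    show c • f n = 0
    rw [hN n hn, smul_zero]

/-- The multiplication of `R[[x⁻¹, x]]`, realized as a convolution product on
functions `ℤ → R` with support bounded above. -/
noncomputable def lmul {R : Type u} [CommRing R] (f g : ↥(IntBdd R R)) : ↥(IntBdd R R) :=
  ⟨fun n => ∑ᶠ i : ℤ, f.1 i * g.1 (n - i), by
    obtain ⟨N, hN⟩ := f.2
    obtain ⟨K, hK⟩ := g.2
    refine ⟨N + K, fun n hn => ?_⟩
    apply finsum_eq_zero_of_forall_eq_zero
    intro i
    by_cases h : N < i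
    · rw [hN i h, zero_mul]
    · rw [hK (n - i) (by omega), mul_zero]⟩

namespace SComplexData

variable {R : Type u} [CommRing R]

/-- The carrier of the small equivariant complex `𝔣Ĉ_* = C_{*-1} ⊕ R[x]`,
with `R[x]` realized as finitely supported functions `ℕ → R`. -/
abbrev Small (X : SComplexData R) : Type u := X.Tot × ↥(NatBdd R R)

/-- `Σᵢ vⁱ δ₂(aᵢ)` for a polynomial with coefficients `aᵢ`. -/
noncomputable def sumV (X : SComplexData R) (f : ↥(NatBdd R R)) : X.Tot :=
  ∑ᶠ i : ℕ, (X.v ^ i) (X.δ₂ (f.1 i))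

/-- The differential `𝔡̂(α, Σᵢ aᵢxⁱ) = (dα − Σᵢ vⁱδ₂(aᵢ), 0)` of the small
equivariant complex. -/
noncomputable def smallD (X : SComplexData R) : X.Small → X.Small :=
  fun z => (X.d z.1 - X.sumV z.2, 0)

/-- The `R[x]`-module structure of the small equivariant complex:
`x · (α, p(x)) = (v(α), δ₁(α) + x·p(x))`; this is the action of `x`. -/
noncomputable def xSmall (X : SComplexData R) : X.Small → X.Small :=
  fun z => (X.v z.1, ⟨fun n => if n = 0 then X.δ₁ z.1 else z.2.1 (n - 1), by
    obtain ⟨N, hN⟩ := z.2.2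
    refine ⟨N + 1, fun n hn => ?_⟩
    show (if n = 0 then X.δ₁ z.1 else z.2.1 (n - 1)) = 0
    rw [if_neg (by omega)]
    exact hN (n - 1) (by omega)⟩)

/-- The map `𝔦 : 𝔣Ĉ_* → R[[x⁻¹, x]]`,
`𝔦(α, Σᵢ aᵢxⁱ) = Σ_{i ≤ −1} δ₁v^{−i−1}(α) xⁱ + Σᵢ aᵢxⁱ`. -/
noncomputable def iota (X : SComplexData R) : X.Small → ↥(IntBdd R R) :=
  fun z => ⟨fun n => if n < 0 then X.δ₁ ((X.v ^ (-n - 1).toNat) z.1) else z.2.1 n.toNat, by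
    obtain ⟨N, hN⟩ := z.2.2
    refine ⟨(N : ℤ), fun n hn => ?_⟩
    show (if n < 0 then X.δ₁ ((X.v ^ (-n - 1).toNat) z.1) else z.2.1 n.toNat) = 0
    rw [if_neg (by omega)]
    exact hN n.toNat (by omega)⟩

/-- `𝔍(C̃) = 𝔦(ker 𝔡̂)`, an `R[x]`-submodule of `R[[x⁻¹, x]]`, here recorded
as a set. -/
noncomputable def JJ (X : SComplexData R) : Set ↥(IntBdd R R) :=
  X.iota '' {z | X.smallD z = 0}

/-- `DegEq Q n` means that the Laurent series `Q` is nonzero with `Deg Q = n`,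
i.e. `n` is the largest exponent with nonzero coefficient. -/
def DegEq {R : Type u} [CommRing R] (Q : ↥(IntBdd R R)) (n : ℤ) : Prop :=
  Q.1 n ≠ 0 ∧ ∀ m : ℤ, n < m → Q.1 m = 0

/-- The set of degrees of nonzero elements of `𝔍(C̃)`. -/
noncomputable def degSet (X : SComplexData R) : Set ℤ :=
  {n : ℤ | ∃ Q ∈ X.JJ, DegEq Q n}

/-- The Frøyshov invariant `h(C̃) = −inf {Deg Q : 0 ≠ Q ∈ 𝔍(C̃)}`. -/
noncomputable def hInv (X : SComplexData R) : ℤ := -sInf X.degSet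

/-- The ideal `J_i(C̃) = {a ∈ R : ∃ Q = a·x^{−i} + (lower order terms) ∈ 𝔍(C̃)}`,
recorded as a set. -/
noncomputable def Jideal (X : SComplexData R) (i : ℤ) : Set R :=
  {a : R | ∃ Q ∈ X.JJ, (∀ m : ℤ, -i < m → Q.1 m = 0) ∧ Q.1 (-i) = a}

end SComplexData

/-! The morphism gives an inclusion `𝔍(C̃) ⊆ 𝔍(C̃')`. A cycle `(α, p)` of `𝔣Ĉ` goes to the
cycle `(λα + c, p)` of `𝔣Ĉ'`, where `c` has degree `≤ 0` and `d'c = Σ v'ⁱδ₂'(pᵢ) − λ(Σ vⁱδ₂(pᵢ))`;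
such a `c` is built by induction on `i`, starting from `d'Δ₂ + λδ₂ = δ₂'` and using
`v'λ − λv = d'μ` on `vⁱδ₂(R)`. Both cycles have the same image under `𝔦`: every `δ₁'v'ᵏ`
vanishes on the `v'`-stable submodule spanned by boundaries and elements of degree `≤ 0`, modulo
which `v'ᵏλα ≡ λvᵏα`; and `δ₁'λ = δ₁ + Δ₁d`, where `Δ₁` kills `dvᵏα` for degree reasons.
Finally, the degrees occurring in `𝔍(C̃')` are bounded below because `v'` is nilpotent, and
`𝔍(C̃)` contains `xᴷ` for large `K`. -/

section Sublevel

variable {R M N : Type*} [CommRing R] [AddCommGroup M] [Module R M] [AddCommGroup N] [Module R N]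

def sublevel (𝒢 : ℤ → Submodule R M) (n : ℤ) : Submodule R M :=
  ⨆ (i : ℤ) (_ : i ≤ n), 𝒢 i

variable {𝒢 : ℤ → Submodule R M} {ℋ : ℤ → Submodule R N}

theorem mem_sublevel_of_mem {i n : ℤ} {x : M} (hx : x ∈ 𝒢 i) (hi : i ≤ n) :
    x ∈ sublevel 𝒢 n :=
  (le_iSup₂_of_le i hi le_rfl : 𝒢 i ≤ sublevel 𝒢 n) hx

theorem apply_mem_sublevel (φ : M →ₗ[R] N) {k n m : ℤ} (hφ : ∀ i, (𝒢 i).map φ ≤ ℋ (i - k))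
    (h : n - k ≤ m) {x : M} (hx : x ∈ sublevel 𝒢 n) : φ x ∈ sublevel ℋ m := by
  refine (Submodule.map_le_iff_le_comap.2 ?_) (Submodule.mem_map_of_mem hx)
  exact iSup₂_le fun i hi => Submodule.map_le_iff_le_comap.1
    ((hφ i).trans (le_iSup₂_of_le (i - k) (by omega) le_rfl))

theorem apply_eq_zero_of_mem_sublevel (φ : M →ₗ[R] N) {c n : ℤ}
    (hφ : ∀ i, i ≠ c → ∀ x ∈ 𝒢 i, φ x = 0) (hn : n < c) {x : M} (hx : x ∈ sublevel 𝒢 n) :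
    φ x = 0 :=
  (iSup₂_le fun i hi y hy => hφ i (by omega) y hy : sublevel 𝒢 n ≤ LinearMap.ker φ) hx

end Sublevel

namespace SComplexData

variable {R : Type u} [CommRing R]

theorem iota_apply_of_neg (X : SComplexData R) (z : X.Small) {n : ℤ} (hn : n < 0) :
    (X.iota z).1 n = X.δ₁ ((X.v ^ (-n - 1).toNat) z.1) :=
  if_pos hn

theorem iota_apply_of_nonneg (X : SComplexData R) (z : X.Small) {n : ℤ} (hn : 0 ≤ n) :
    (X.iota z).1 n = z.2.1 n.toNat :=
  if_neg (not_lt.2 hn)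

theorem smallD_eq_zero_iff (X : SComplexData R) (z : X.Small) :
    X.smallD z = 0 ↔ X.d z.1 = X.sumV z.2 := by
  simp [smallD, Prod.ext_iff, sub_eq_zero]

theorem sumV_eq_sum (X : SComplexData R) (p : ↥(NatBdd R R)) {N : ℕ}
    (hN : ∀ n, N < n → p.1 n = 0) :
    X.sumV p = ∑ i ∈ Finset.range (N + 1), (X.v ^ i) (X.δ₂ (p.1 i)) := by
  refine finsum_eq_sum_of_support_subset _ fun i hi => ?_
  by_contra hiN
  simp_all [hN i (by simpa using hiN)]

namespace IsSComplex

variable {X : SComplexData R}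

theorem d_v_apply (hX : X.IsSComplex) (y : X.Tot) :
    X.d (X.v y) = X.v (X.d y) + X.δ₂ (X.δ₁ y) := by
  have h := LinearMap.congr_fun hX.d_v y
  simp only [LinearMap.sub_apply, LinearMap.comp_apply, LinearMap.zero_apply] at h
  rwa [sub_sub, sub_eq_zero] at h

theorem v_pow_mem_grading (hX : X.IsSComplex) {i : ℤ} {x : X.Tot} (hx : x ∈ X.grading i)
    (k : ℕ) : (X.v ^ k) x ∈ X.grading (i - 2 * k) := by
  induction k with
  | zero => simpa using hx
  | succ k ih =>
    rw [pow_succ', Module.End.mul_apply]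
    convert hX.v_deg _ (Submodule.mem_map_of_mem ih) using 2
    push_cast; ring

theorem exists_finset_grading_eq_bot (hX : X.IsSComplex) :
    ∃ s : Finset ℤ, ∀ j ∉ s, X.grading j = ⊥ := by
  have hcpt : IsCompactElement (⊤ : Submodule R X.Tot) :=
    (Submodule.fg_iff_compact _).1 (Module.finite_def.1 hX.finite)
  obtain ⟨s, hs⟩ := CompleteLattice.IsCompactElement.exists_finset_of_le_iSup _ hcpt
    X.grading hX.internal.submodule_iSup_eq_top.ge
  refine ⟨s, fun j hj => (hX.internal.submodule_iSupIndep j).eq_bot_of_le ?_⟩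
  refine le_top.trans (hs.trans (iSup₂_le fun i hi => ?_))
  exact le_iSup₂ (f := fun i (_ : i ≠ j) => X.grading i) i (by rintro rfl; exact hj hi)

theorem isNilpotent_v (hX : X.IsSComplex) : IsNilpotent X.v := by
  obtain ⟨s, hs⟩ := hX.exists_finset_grading_eq_bot
  set N := s.sup Int.natAbs
  have hN : ∀ i ∈ s, i.natAbs ≤ N := fun i hi => Finset.le_sup (f := Int.natAbs) hi
  refine ⟨N + 1, LinearMap.ker_eq_top.1 (eq_top_iff.2 ?_)⟩
  rw [← hX.internal.submodule_iSup_eq_top]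
  refine iSup_le fun i x hx => ?_
  by_cases hi : i ∈ s
  · have hlow : i - 2 * ((N + 1 : ℕ) : ℤ) ∉ s := fun h => by
      have := hN _ h
      have := hN i hi
      omega
    have hv := hX.v_pow_mem_grading hx (N + 1)
    rwa [hs _ hlow, Submodule.mem_bot] at hv
  · rw [hs i hi, Submodule.mem_bot] at hx
    simp [hx]

theorem v_mem_sublevel (hX : X.IsSComplex) {n : ℤ} {x : X.Tot}
    (hx : x ∈ sublevel X.grading n) : X.v x ∈ sublevel X.grading n :=
  apply_mem_sublevel X.v hX.v_deg (by omega) hx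

theorem δ₂_mem_sublevel (hX : X.IsSComplex) {n : ℤ} (hn : -2 ≤ n) (r : R) :
    X.δ₂ r ∈ sublevel X.grading n :=
  mem_sublevel_of_mem (hX.δ₂_deg ⟨r, rfl⟩) hn

theorem δ₁_eq_zero_of_mem_sublevel (hX : X.IsSComplex) {x : X.Tot}
    (hx : x ∈ sublevel X.grading 0) : X.δ₁ x = 0 :=
  apply_eq_zero_of_mem_sublevel X.δ₁ hX.δ₁_deg zero_lt_one hx

theorem v_pow_δ₂_mem_sublevel (hX : X.IsSComplex) {n : ℤ} (hn : -2 ≤ n) (k : ℕ) (r : R) :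
    (X.v ^ k) (X.δ₂ r) ∈ sublevel X.grading n := by
  induction k with
  | zero => exact hX.δ₂_mem_sublevel hn r
  | succ k ih => rw [pow_succ', Module.End.mul_apply]; exact hX.v_mem_sublevel ih

theorem d_v_pow_δ₂ (hX : X.IsSComplex) (k : ℕ) (r : R) : X.d ((X.v ^ k) (X.δ₂ r)) = 0 := by
  induction k with
  | zero => exact LinearMap.congr_fun hX.d_δ₂ r
  | succ k ih =>
    rw [pow_succ', Module.End.mul_apply, hX.d_v_apply, ih, map_zero, zero_add,
      hX.δ₁_eq_zero_of_mem_sublevel (hX.v_pow_δ₂_mem_sublevel (by norm_num) k r), map_zero]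

theorem sumV_mem_sublevel (hX : X.IsSComplex) (p : ↥(NatBdd R R)) :
    X.sumV p ∈ sublevel X.grading (-1) := by
  obtain ⟨N, hN⟩ := p.2
  rw [X.sumV_eq_sum p hN]
  exact Submodule.sum_mem _ fun i _ => hX.v_pow_δ₂_mem_sublevel (by norm_num) i _

theorem d_v_pow_mem_sublevel (hX : X.IsSComplex) {y : X.Tot}
    (hy : X.d y ∈ sublevel X.grading (-1)) (k : ℕ) :
    X.d ((X.v ^ k) y) ∈ sublevel X.grading (-1) := by
  induction k with
  | zero => exact hy
  | succ k ih =>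
    rw [pow_succ', Module.End.mul_apply, hX.d_v_apply]
    exact add_mem (hX.v_mem_sublevel ih) (hX.δ₂_mem_sublevel (by norm_num) _)

theorem v_mem_sublevel_sup_range (hX : X.IsSComplex) {x : X.Tot}
    (hx : x ∈ sublevel X.grading 0 ⊔ LinearMap.range X.d) :
    X.v x ∈ sublevel X.grading 0 ⊔ LinearMap.range X.d := by
  obtain ⟨a, ha, _, ⟨ξ, rfl⟩, rfl⟩ := Submodule.mem_sup.1 hx
  have hvd : X.v (X.d ξ) = X.d (X.v ξ) - X.δ₂ (X.δ₁ ξ) := by rw [hX.d_v_apply]; abel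
  rw [map_add, hvd]
  exact add_mem (Submodule.mem_sup_left (hX.v_mem_sublevel ha))
    (sub_mem (Submodule.mem_sup_right ⟨_, rfl⟩)
      (Submodule.mem_sup_left (hX.δ₂_mem_sublevel (by norm_num) _)))

theorem v_pow_mem_sublevel_sup_range (hX : X.IsSComplex) {x : X.Tot}
    (hx : x ∈ sublevel X.grading 0 ⊔ LinearMap.range X.d) (k : ℕ) :
    (X.v ^ k) x ∈ sublevel X.grading 0 ⊔ LinearMap.range X.d := by
  induction k with
  | zero => exact hx
  | succ k ih => rw [pow_succ', Module.End.mul_apply]; exact hX.v_mem_sublevel_sup_range ih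

theorem δ₁_eq_zero_of_mem_sublevel_sup_range (hX : X.IsSComplex) {x : X.Tot}
    (hx : x ∈ sublevel X.grading 0 ⊔ LinearMap.range X.d) : X.δ₁ x = 0 := by
  obtain ⟨a, ha, _, ⟨ξ, rfl⟩, rfl⟩ := Submodule.mem_sup.1 hx
  rw [map_add, hX.δ₁_eq_zero_of_mem_sublevel ha, ← LinearMap.comp_apply, hX.δ₁_d,
    LinearMap.zero_apply, add_zero]

theorem degSet_nonempty [Nontrivial R] (hX : X.IsSComplex) : X.degSet.Nonempty := by
  obtain ⟨K, hK⟩ := hX.isNilpotent_v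
  -- `(0, xᴷ)` is a cycle since `vᴷ = 0`, and `𝔦` sends it to `xᴷ`.
  let xK : ↥(NatBdd R R) := ⟨Pi.single K 1, K, fun n hn => Pi.single_eq_of_ne (by omega) 1⟩
  have hsumV : X.sumV xK = 0 := by
    rw [sumV, finsum_eq_single _ K fun i hi => by simp [xK, Pi.single_eq_of_ne hi]]
    simp [hK]
  refine ⟨K, X.iota (0, xK), ⟨(0, xK), ?_, rfl⟩, ?_, fun m hm => ?_⟩
  · exact (smallD_eq_zero_iff _ _).2 (by rw [hsumV, map_zero])
  · rw [iota_apply_of_nonneg _ _ (by omega)]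
    simp [xK]
  · rw [iota_apply_of_nonneg _ _ (by omega)]
    simp [xK, Pi.single_eq_of_ne (show m.toNat ≠ K by omega)]

theorem degSet_bddBelow (hX : X.IsSComplex) : BddBelow X.degSet := by
  obtain ⟨K, hK⟩ := hX.isNilpotent_v
  refine ⟨-K, ?_⟩
  rintro n ⟨_, ⟨z, -, rfl⟩, hn, -⟩
  by_contra! hlt
  rw [iota_apply_of_neg _ _ (by omega), pow_eq_zero_of_le (by omega) hK] at hn
  simp at hn

end IsSComplex

namespace SMorphism

variable {A B : SComplexData R}

theorem l_d_apply (f : SMorphism A B) (y : A.Tot) : f.l (A.d y) = B.d (f.l y) :=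
  LinearMap.congr_fun f.comm_d y

theorem δ₁_l_apply (f : SMorphism A B) (y : A.Tot) :
    B.δ₁ (f.l y) = f.Δ₁ (A.d y) + A.δ₁ y :=
  (LinearMap.congr_fun f.comm_δ₁ y).symm

theorem d_Δ₂_add_l_δ₂ (f : SMorphism A B) (r : R) : B.d (f.Δ₂ r) + f.l (A.δ₂ r) = B.δ₂ r :=
  LinearMap.congr_fun f.comm_δ₂ r

theorem v_l_sub_l_v (f : SMorphism A B) (y : A.Tot) :
    B.v (f.l y) - f.l (A.v y)
      = f.μ (A.d y) + B.d (f.μ y) + f.Δ₂ (A.δ₁ y) - B.δ₂ (f.Δ₁ y) := by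
  have h := LinearMap.congr_fun f.comm_v y
  simp only [LinearMap.sub_apply, LinearMap.add_apply, LinearMap.comp_apply,
    LinearMap.zero_apply] at h
  rw [← sub_eq_zero, ← neg_eq_zero, ← h]
  abel

theorem Δ₂_mem_sublevel (f : SMorphism A B) (r : R) : f.Δ₂ r ∈ sublevel B.grading 0 :=
  mem_sublevel_of_mem (f.Δ₂_deg ⟨r, rfl⟩) (by norm_num)

theorem μ_mem_sublevel (f : SMorphism A B) {x : A.Tot} (hx : x ∈ sublevel A.grading (-1)) :
    f.μ x ∈ sublevel B.grading 0 :=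
  apply_mem_sublevel f.μ f.μ_deg (by norm_num) hx

theorem Δ₁_eq_zero_of_mem_sublevel (f : SMorphism A B) {x : A.Tot}
    (hx : x ∈ sublevel A.grading (-1)) : f.Δ₁ x = 0 :=
  apply_eq_zero_of_mem_sublevel f.Δ₁ f.Δ₁_deg (by norm_num) hx

theorem δ₁_l_eq_of_d_mem_sublevel (f : SMorphism A B) {y : A.Tot}
    (hy : A.d y ∈ sublevel A.grading (-1)) : B.δ₁ (f.l y) = A.δ₁ y := by
  rw [f.δ₁_l_apply, f.Δ₁_eq_zero_of_mem_sublevel hy, zero_add]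

theorem v_l_sub_l_v_mem (hB : B.IsSComplex) (f : SMorphism A B) {y : A.Tot}
    (hy : A.d y ∈ sublevel A.grading (-1)) :
    B.v (f.l y) - f.l (A.v y) ∈ sublevel B.grading 0 ⊔ LinearMap.range B.d := by
  rw [f.v_l_sub_l_v]
  refine sub_mem (add_mem (add_mem ?_ (Submodule.mem_sup_right ⟨_, rfl⟩)) ?_) ?_
  · exact Submodule.mem_sup_left (f.μ_mem_sublevel hy)
  · exact Submodule.mem_sup_left (f.Δ₂_mem_sublevel _)
  · exact Submodule.mem_sup_left (hB.δ₂_mem_sublevel (by norm_num) _)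

theorem v_pow_l_sub_l_v_pow_mem (hA : A.IsSComplex) (hB : B.IsSComplex) (f : SMorphism A B)
    {y : A.Tot} (hy : A.d y ∈ sublevel A.grading (-1)) (k : ℕ) :
    (B.v ^ k) (f.l y) - f.l ((A.v ^ k) y) ∈ sublevel B.grading 0 ⊔ LinearMap.range B.d := by
  induction k with
  | zero => simp
  | succ k ih =>
    have h := add_mem (hB.v_mem_sublevel_sup_range ih)
      (f.v_l_sub_l_v_mem hB (hA.d_v_pow_mem_sublevel hy k))
    rw [map_sub, sub_add_sub_cancel] at h
    simpa only [pow_succ', Module.End.mul_apply] using h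

theorem δ₁_v_pow_l_add (hA : A.IsSComplex) (hB : B.IsSComplex) (f : SMorphism A B)
    {y : A.Tot} {c : B.Tot} (hy : A.d y ∈ sublevel A.grading (-1))
    (hc : c ∈ sublevel B.grading 0 ⊔ LinearMap.range B.d) (k : ℕ) :
    B.δ₁ ((B.v ^ k) (f.l y + c)) = A.δ₁ ((A.v ^ k) y) := by
  have h := add_mem (f.v_pow_l_sub_l_v_pow_mem hA hB hy k) (hB.v_pow_mem_sublevel_sup_range hc k)
  rw [sub_add_eq_add_sub, ← map_add] at h
  rw [← sub_add_cancel ((B.v ^ k) (f.l y + c)) (f.l ((A.v ^ k) y)), map_add,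
    hB.δ₁_eq_zero_of_mem_sublevel_sup_range h, zero_add,
    f.δ₁_l_eq_of_d_mem_sublevel (hA.d_v_pow_mem_sublevel hy k)]

theorem v_pow_δ₂_sub_l_mem (hA : A.IsSComplex) (hB : B.IsSComplex) (f : SMorphism A B)
    (r : R) (i : ℕ) :
    (B.v ^ i) (B.δ₂ r) - f.l ((A.v ^ i) (A.δ₂ r)) ∈ (sublevel B.grading 0).map B.d := by
  induction i with
  | zero => exact ⟨f.Δ₂ r, f.Δ₂_mem_sublevel r, by simp [← f.d_Δ₂_add_l_δ₂ r]⟩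
  | succ i ih =>
    obtain ⟨c, hc, hdc⟩ := ih
    set y := (A.v ^ i) (A.δ₂ r)
    have hy_low : y ∈ sublevel A.grading (-1) := hA.v_pow_δ₂_mem_sublevel (by norm_num) i r
    have hy : B.v (f.l y) - f.l (A.v y) = B.d (f.μ y) := by
      rw [f.v_l_sub_l_v, hA.d_v_pow_δ₂,
        hA.δ₁_eq_zero_of_mem_sublevel (hA.v_pow_δ₂_mem_sublevel (by norm_num) i r),
        f.Δ₁_eq_zero_of_mem_sublevel hy_low]
      simp
    refine ⟨B.v c + f.μ y, add_mem (hB.v_mem_sublevel hc) (f.μ_mem_sublevel hy_low), ?_⟩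
    calc B.d (B.v c + f.μ y) = B.v (B.d c) + (B.v (f.l y) - f.l (A.v y)) := by
          rw [map_add, hB.d_v_apply, hB.δ₁_eq_zero_of_mem_sublevel hc, map_zero, add_zero, hy]
      _ = _ := by
          rw [hdc, map_sub, pow_succ', pow_succ']
          simp only [Module.End.mul_apply]
          abel

theorem sumV_sub_l_sumV_mem (hA : A.IsSComplex) (hB : B.IsSComplex) (f : SMorphism A B)
    (p : ↥(NatBdd R R)) : B.sumV p - f.l (A.sumV p) ∈ (sublevel B.grading 0).map B.d := by
  obtain ⟨N, hN⟩ := p.2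
  rw [B.sumV_eq_sum p hN, A.sumV_eq_sum p hN, map_sum, ← Finset.sum_sub_distrib]
  exact Submodule.sum_mem _ fun i _ => f.v_pow_δ₂_sub_l_mem hA hB _ i

theorem JJ_subset (hA : A.IsSComplex) (hB : B.IsSComplex) (f : SMorphism A B) :
    A.JJ ⊆ B.JJ := by
  rintro _ ⟨⟨α, p⟩, hz, rfl⟩
  replace hz : A.d α = A.sumV p := (smallD_eq_zero_iff _ _).1 hz
  obtain ⟨c, hc, hdc⟩ := f.sumV_sub_l_sumV_mem hA hB p
  refine ⟨(f.l α + c, p), (smallD_eq_zero_iff _ _).2 ?_, Subtype.ext (funext fun n => ?_)⟩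
  · rw [map_add, ← f.l_d_apply, hz, hdc, add_sub_cancel]
  · rcases lt_or_ge n 0 with hn | hn
    · rw [iota_apply_of_neg _ _ hn, iota_apply_of_neg _ _ hn]
      exact f.δ₁_v_pow_l_add hA hB (hz ▸ hA.sumV_mem_sublevel p) (Submodule.mem_sup_left hc) _
    · rw [iota_apply_of_nonneg _ _ hn, iota_apply_of_nonneg _ _ hn]

theorem degSet_subset (hA : A.IsSComplex) (hB : B.IsSComplex) (f : SMorphism A B) :
    A.degSet ⊆ B.degSet :=
  fun _ ⟨Q, hQ, hdeg⟩ => ⟨Q, f.JJ_subset hA hB hQ, hdeg⟩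

end SMorphism

end SComplexData

open SComplexData in
/-- **Statement 3.** If there is a morphism of S-complexes `C̃ → C̃'` over an
integral domain `R`, then `h(C̃) ≤ h(C̃')`. -/
theorem statement3 {R : Type u} [CommRing R] [IsDomain R]
    (A B : SComplexData R) (hA : A.IsSComplex) (hB : B.IsSComplex)
    (f : SMorphism A B) : A.hInv ≤ B.hInv :=
  neg_le_neg (csInf_le_csInf hB.degSet_bddBelow hA.degSet_nonempty (f.degSet_subset hA hB))
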